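/- For the Lennard-Jones potential, the function h(r) := φ''(r) + 4 φ''(2r) (which equals a₀ W''(r/a₀) for the energy density W(D) := (φ(D a₀) + φ(2 D a₀))/a₀) changes sign exactly once: h(r) > 0 for 0 < r < (53261/29120)^{1/6}, h((53261/29120)^{1/6}) = 0, and h(r) < 0 for r > (53261/29120)^{1/6}; moreover (53261/29120)^{1/6} > 1, so this sign change occurs at a deformation gradient D̃ > 1 whenever a₀ ≤ 1. -/

import Mathlib

/-!
Both `φ''(r) = 156 r⁻¹⁴ - 84 r⁻⁸` and `4 φ''(2r) = 156·2⁻¹² r⁻¹⁴ - 84·2⁻⁶ r⁻⁸` are combinations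
of `r⁻¹⁴` and `r⁻⁸`, so `h(r) = (1365/16) r⁻¹⁴ (53261/29120 - r⁶)`: the sign of `h` is that of
`53261/29120 - r⁶`, which changes exactly at `r = (53261/29120)^{1/6}`.
-/

/-- The Lennard-Jones potential `φ(r) = r⁻¹² − 2 r⁻⁶`. -/
noncomputable def LJ : ℝ → ℝ := fun r => r ^ (-12 : ℤ) - 2 * r ^ (-6 : ℤ)

/-- The point where `h(r) := φ''(r) + 4 φ''(2r)` changes sign. -/
noncomputable def ljInflection : ℝ := ((53261 : ℝ) / 29120) ^ ((1 : ℝ) / 6)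

lemma hasDerivAt_LJ {x : ℝ} (hx : x ≠ 0) :
    HasDerivAt LJ (-12 * x ^ (-13 : ℤ) + 12 * x ^ (-7 : ℤ)) x := by
  refine ((hasDerivAt_zpow (-12) x (Or.inl hx)).sub
    ((hasDerivAt_zpow (-6) x (Or.inl hx)).const_mul 2)).congr_deriv ?_
  norm_num
  ring

lemma hasDerivAt_deriv_LJ {x : ℝ} (hx : x ≠ 0) :
    HasDerivAt (deriv LJ) (156 * x ^ (-14 : ℤ) - 84 * x ^ (-8 : ℤ)) x := by
  have hderiv : deriv LJ =ᶠ[nhds x] fun y => -12 * y ^ (-13 : ℤ) + 12 * y ^ (-7 : ℤ) := by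
    filter_upwards [eventually_ne_nhds hx] with y hy using (hasDerivAt_LJ hy).deriv
  refine HasDerivAt.congr_of_eventuallyEq ?_ hderiv
  refine (((hasDerivAt_zpow (-13) x (Or.inl hx)).const_mul (-12)).add
    ((hasDerivAt_zpow (-7) x (Or.inl hx)).const_mul 12)).congr_deriv ?_
  norm_num
  ring

lemma deriv_deriv_LJ_add_four_mul {r : ℝ} (hr : r ≠ 0) :
    deriv (deriv LJ) r + 4 * deriv (deriv LJ) (2 * r)
      = 1365 / 16 * r ^ (-14 : ℤ) * (53261 / 29120 - r ^ 6) := by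
  rw [(hasDerivAt_deriv_LJ hr).deriv, (hasDerivAt_deriv_LJ (mul_ne_zero two_ne_zero hr)).deriv]
  simp only [zpow_neg, zpow_ofNat]
  field_simp
  ring

lemma ljInflection_pos : 0 < ljInflection := by
  unfold ljInflection
  positivity

lemma ljInflection_pow_six : ljInflection ^ 6 = 53261 / 29120 := by
  rw [ljInflection, one_div]
  exact_mod_cast Real.rpow_inv_natCast_pow (n := 6) (by norm_num : (0 : ℝ) ≤ 53261 / 29120)
    (by norm_num)

lemma one_lt_ljInflection : 1 < ljInflection := by
  refine lt_of_pow_lt_pow_left₀ 6 ljInflection_pos.le ?_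
  rw [ljInflection_pow_six]
  norm_num

/-- For the Lennard-Jones potential, `h(r) := φ''(r) + 4 φ''(2r)` (which equals
`a₀ W''(r/a₀)`) changes sign exactly once, at `(53261/29120)^{1/6} > 1`; hence the sign
change occurs at a deformation gradient `D̃ > 1` whenever `a₀ ≤ 1`. -/
theorem stmt_10 :
    (∀ r : ℝ, 0 < r → r < ljInflection →
      0 < deriv (deriv LJ) r + 4 * deriv (deriv LJ) (2 * r)) ∧
    deriv (deriv LJ) ljInflection + 4 * deriv (deriv LJ) (2 * ljInflection) = 0 ∧
    (∀ r : ℝ, ljInflection < r →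
      deriv (deriv LJ) r + 4 * deriv (deriv LJ) (2 * r) < 0) ∧
    1 < ljInflection ∧
    (∀ a₀ : ℝ, 0 < a₀ → a₀ ≤ 1 → 1 < ljInflection / a₀) := by
  refine ⟨fun r hr hrL => ?_, ?_, fun r hrL => ?_, one_lt_ljInflection,
    fun a₀ ha₀ ha₁ => (one_lt_div ha₀).2 (ha₁.trans_lt one_lt_ljInflection)⟩
  · have hr6 : r ^ 6 < 53261 / 29120 :=
      ljInflection_pow_six ▸ pow_lt_pow_left₀ hrL hr.le (by norm_num)
    rw [deriv_deriv_LJ_add_four_mul hr.ne']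
    have : 0 < 53261 / 29120 - r ^ 6 := sub_pos.2 hr6
    positivity
  · rw [deriv_deriv_LJ_add_four_mul ljInflection_pos.ne', ljInflection_pow_six, sub_self, mul_zero]
  · have hr : 0 < r := ljInflection_pos.trans hrL
    have hr6 : 53261 / 29120 < r ^ 6 :=
      ljInflection_pow_six ▸ pow_lt_pow_left₀ hrL ljInflection_pos.le (by norm_num)
    rw [deriv_deriv_LJ_add_four_mul hr.ne']
    exact mul_neg_of_pos_of_neg (by positivity) (sub_neg.2 hr6)
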